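/- Let Π be a finite set of regimes with at least two elements, let D be any set, and for each pair of distinct i, j ∈ Π let h_{ij} : D → ℝ be a switching-cost function satisfying h_{ij}(z) > 0 for all z ∈ D and the strict triangle inequality h_{ik}(z) < h_{ij}(z) + h_{jk}(z) for all pairwise distinct i, j, k ∈ Π and all z ∈ D. Suppose the functions V_i : D → ℝ satisfy the obstacle inequality V_i(z) ≥ V_k(z) − h_{ik}(z) for all i ∈ Π, all k ≠ i, and all z ∈ D. Then for any distinct i, j ∈ Π and any point z ∈ D at which V_i(z) = V_j(z) − h_{ij}(z), one has V_j(z) > V_k(z) − h_{jk}(z) for every k ≠ j. In particular, the switching region S_{ij} = {z ∈ D : V_i(z) = V_j(z) − h_{ij}(z)} is contained in the continuation region C_j = {z ∈ D : V_j(z) > max_{k ≠ j}(V_k(z) − h_{jk}(z))}. -/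

import Mathlib

theorem switching_region_subset_continuation_region_general
    {I D : Type*}
    (h : I → I → D → ℝ) (V : I → D → ℝ)
    (hpos : ∀ i j : I, i ≠ j → ∀ z : D, 0 < h i j z)
    (htri : ∀ i j k : I, i ≠ j → j ≠ k → i ≠ k → ∀ z : D,
      h i k z < h i j z + h j k z)
    (hobs : ∀ i : I, ∀ k : I, k ≠ i → ∀ z : D, V i z ≥ V k z - h i k z) :
    ∀ i j : I, i ≠ j → ∀ z : D, V i z = V j z - h i j z →
      ∀ k : I, k ≠ j → V j z > V k z - h j k z := by
  intro i j hij z hswitch k hkj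
  -- `c` is the cost of moving from `i` to `k` directly (`0` when `k = i`); going through `j`
  -- costs strictly more, which is all the argument needs.
  obtain ⟨c, hobs_c, hc⟩ : ∃ c, V k z - c ≤ V i z ∧ c < h i j z + h j k z := by
    by_cases hki : k = i
    · subst hki
      exact ⟨0, by simp, by linarith [hpos k j hij z, hpos j k hij.symm z]⟩
    · exact ⟨h i k z, hobs i k hki z, htri i j k hij hkj.symm (Ne.symm hki) z⟩
  linarith

/-- In the optimal switching model, under positive switching costs satisfying the strict
triangle inequality and the obstacle inequality for the value functions, the switching
region `S_{ij}` is contained in the continuation region `C_j`: at any point where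
`V_i = V_j - h_{ij}`, one has `V_j > V_k - h_{jk}` for every `k ≠ j`. -/
theorem switching_region_subset_continuation_region
    {I D : Type*} [Fintype I] [Nontrivial I]
    (h : I → I → D → ℝ) (V : I → D → ℝ)
    (hpos : ∀ i j : I, i ≠ j → ∀ z : D, 0 < h i j z)
    (htri : ∀ i j k : I, i ≠ j → j ≠ k → i ≠ k → ∀ z : D,
      h i k z < h i j z + h j k z)
    (hobs : ∀ i : I, ∀ k : I, k ≠ i → ∀ z : D, V i z ≥ V k z - h i k z) :
    ∀ i j : I, i ≠ j → ∀ z : D, V i z = V j z - h i j z →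
      ∀ k : I, k ≠ j → V j z > V k z - h j k z :=
  switching_region_subset_continuation_region_general h V hpos htri hobs
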